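/- arXiv:1608.03546 — 3 statements merged into one kernel-verified Lean document; each statement's English description precedes it below -/
import Mathlib

section
/- Let G be a group and let M₁ and M₂ be vast subsets of G. Then M₁ ∩ M₂ is a vast subset of G. -/
/-!
Colour a pair `{a, b}` of distinct elements according to whether `a⁻¹b, b⁻¹a ∈ M₁`. By Ramsey's
theorem a large enough `P` contains either `m₁` elements pairwise of the second colour, which
`Φ_{m₁}` for `M₁` forbids, or `m₂` elements pairwise of the first colour, among which `Φ_{m₂}` for
`M₂` finds a pair that is then good for both sets. Requiring `|P| ≥ m₁` also yields `1 ∈ M₁`.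
-/

open Pointwise

/-- Condition `Φ_m`: for every `m`-element subset `P` of `G` there exist two distinct
elements `a, b ∈ P` such that `{a,b}⁻¹{a,b} ⊆ M`, i.e. `1 ∈ M`, `a⁻¹b ∈ M`, `b⁻¹a ∈ M`. -/
def PhiCond {G : Type*} [Group G] (m : ℕ) (M : Set G) : Prop :=
  ∀ P : Finset G, P.card = m → ∃ a ∈ P, ∃ b ∈ P, a ≠ b ∧
    (1 : G) ∈ M ∧ a⁻¹ * b ∈ M ∧ b⁻¹ * a ∈ M

/-- `M` is vast if it satisfies `Φ_m` for some positive integer `m`. -/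
def IsVast {G : Type*} [Group G] (M : Set G) : Prop := ∃ m : ℕ, 0 < m ∧ PhiCond m M

open Finset

namespace SimpleGraph

theorem exists_isNClique_or_isNIndepSet {α : Type*} (p q : ℕ) :
    ∃ n, ∀ (G : SimpleGraph α) (s : Finset α), n ≤ #s →
      (∃ t ⊆ s, G.IsNClique p t) ∨ ∃ t ⊆ s, G.IsNIndepSet q t := by
  classical
  induction p generalizing q with
  | zero => exact ⟨0, fun G s _ => .inl ⟨∅, empty_subset s, isNClique_empty.mpr rfl⟩⟩
  | succ p ihp =>
    induction q with
    | zero => exact ⟨0, fun G s _ => .inr ⟨∅, empty_subset s, (isNClique_compl G).mp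
        (isNClique_empty.mpr rfl)⟩⟩
    | succ q ihq =>
      obtain ⟨n₁, hn₁⟩ := ihp (q + 1)
      obtain ⟨n₂, hn₂⟩ := ihq
      refine ⟨n₁ + n₂ + 1, fun G s hs => ?_⟩
      obtain ⟨x, hx⟩ : s.Nonempty := card_pos.mp (by omega)
      set A := {y ∈ s.erase x | G.Adj x y}
      set B := {y ∈ s.erase x | ¬G.Adj x y}
      have hA : A ⊆ s := (filter_subset _ _).trans (erase_subset x s)
      have hB : B ⊆ s := (filter_subset _ _).trans (erase_subset x s)
      have hAB : #A + #B = #s - 1 := by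
        rw [card_filter_add_card_filter_not, card_erase_of_mem hx]
      rcases (by omega : n₁ ≤ #A ∨ n₂ ≤ #B) with hnA | hnB
      · rcases hn₁ G A hnA with ⟨t, htA, ht⟩ | ⟨t, htA, ht⟩
        · refine .inl ⟨insert x t, insert_subset hx (htA.trans hA), ht.insert fun b hb => ?_⟩
          exact (mem_filter.mp (htA hb)).2
        · exact .inr ⟨t, htA.trans hA, ht⟩
      · rcases hn₂ G B hnB with ⟨t, htB, ht⟩ | ⟨t, htB, ht⟩
        · exact .inl ⟨t, htB.trans hB, ht⟩
        · refine .inr ⟨insert x t, insert_subset hx (htB.trans hB), (isNClique_compl G).mp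
            (((isNClique_compl G).mpr ht).insert fun b hb => ?_)⟩
          obtain ⟨hbx, hxb⟩ := mem_filter.mp (htB hb)
          exact (compl_adj G x b).mpr ⟨(ne_of_mem_erase hbx).symm, hxb⟩

end SimpleGraph

section Group

variable {G : Type*} [Group G]

def differenceGraph (M : Set G) : SimpleGraph G where
  Adj a b := a ≠ b ∧ a⁻¹ * b ∈ M ∧ b⁻¹ * a ∈ M
  symm := ⟨fun _ _ ⟨hab, hab', hba'⟩ => ⟨hab.symm, hba', hab'⟩⟩
  loopless := ⟨fun _ h => h.1 rfl⟩

variable {m : ℕ} {M : Set G}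

theorem differenceGraph_adj {a b : G} :
    (differenceGraph M).Adj a b ↔ a ≠ b ∧ a⁻¹ * b ∈ M ∧ b⁻¹ * a ∈ M :=
  Iff.rfl

theorem PhiCond.one_mem (h : PhiCond m M) {s : Finset G} (hs : m ≤ #s) : (1 : G) ∈ M := by
  obtain ⟨t, -, ht⟩ := exists_subset_card_eq hs
  obtain ⟨-, -, -, -, -, h1, -⟩ := h t ht
  exact h1

theorem PhiCond.not_isNIndepSet (h : PhiCond m M) (t : Finset G) :
    ¬(differenceGraph M).IsNIndepSet m t := fun ht => by
  obtain ⟨a, ha, b, hb, hab, -, hab', hba'⟩ := h t ht.card_eq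
  exact ht.isIndepSet ha hb hab (differenceGraph_adj.mpr ⟨hab, hab', hba'⟩)

end Group

theorem stmt_7_general {G : Type*} [Group G] (M₁ M₂ : Set G)
    (h₁ : IsVast M₁) (h₂ : IsVast M₂) :
    IsVast (M₁ ∩ M₂) := by
  obtain ⟨m₁, -, hΦ₁⟩ := h₁
  obtain ⟨m₂, -, hΦ₂⟩ := h₂
  obtain ⟨n, hn⟩ := SimpleGraph.exists_isNClique_or_isNIndepSet (α := G) m₂ m₁
  refine ⟨n + m₁ + 1, by omega, fun P hP => ?_⟩
  have h1 : (1 : G) ∈ M₁ := hΦ₁.one_mem (s := P) (by omega)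
  rcases hn (differenceGraph M₁) P (by omega) with ⟨t, htP, ht⟩ | ⟨t, -, ht⟩
  · obtain ⟨a, ha, b, hb, hab, h1₂, hab₂, hba₂⟩ := hΦ₂ t ht.card_eq
    obtain ⟨-, hab₁, hba₁⟩ := differenceGraph_adj.mp (ht.isClique ha hb hab)
    exact ⟨a, htP ha, b, htP hb, hab, ⟨h1, h1₂⟩, ⟨hab₁, hab₂⟩, ⟨hba₁, hba₂⟩⟩
  · exact absurd ht (hΦ₁.not_isNIndepSet t)

theorem stmt_7 {G : Type*} [Group G] [Infinite G] (M₁ M₂ : Set G)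
    (h₁ : IsVast M₁) (h₂ : IsVast M₂) :
    IsVast (M₁ ∩ M₂) :=
  stmt_7_general M₁ M₂ h₁ h₂
end

section
/- Let (G, τ) be a countably infinite Hausdorff topological group with identity e and topology τ, and let 𝓕 be a nonrapid free filter on G converging to e. Suppose that τ_m ⊆ τ is a metrizable group topology on G coarser than τ, and let (H_n)_{n∈ω} be a sequence of subgroups of finite index in G. Then there exists a set ξ ⊆ G \ {e} such that: (i) ξ is discrete and e is its only limit point, both in (G, τ) and in (G, τ_m); (ii) ξ ∩ F⁻¹F ≠ ∅ for every F ∈ 𝓕; (iii) ξ \ H_n is finite for each n ∈ ω. If, in addition, (G, τ_m) is totally bounded, then (iv) every τ_m-neighborhood of e contains all but finitely many elements of ξ. -/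
open Pointwise

/-- A filter is free if the intersection of all its members is empty. -/
def IsFreeFilter {X : Type*} (F : Filter X) : Prop := ⋂₀ F.sets = ∅

/-- A filter `𝓖` on `X` is nonrapid if, for every `f : ℕ → ℕ`, there is a sequence
`(T n)` of finite subsets of `X` such that every `F ∈ 𝓖` satisfies `|F ∩ T n| ≥ f n`
for some `n`. -/
def NonrapidFilter {X : Type*} (𝓖 : Filter X) : Prop :=
  ∀ f : ℕ → ℕ, ∃ T : ℕ → Finset X, ∀ F ∈ 𝓖, ∃ n : ℕ, f n ≤ (F ∩ (T n : Set X)).ncard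

/-- A subset `D` of a topological space is discrete if every point of `D` has a
neighborhood meeting `D` only in that point. -/
def IsDiscreteSubset {X : Type*} [TopologicalSpace X] (D : Set X) : Prop :=
  ∀ x ∈ D, ∃ U ∈ nhds x, U ∩ D = {x}

/-- `x` is a limit point of `D` if every neighborhood of `x` meets `D \ {x}`. -/
def IsLimitPoint {X : Type*} [TopologicalSpace X] (x : X) (D : Set X) : Prop :=
  ∀ U ∈ nhds x, ((D \ {x}) ∩ U).Nonempty

/-!
Enumerate `G \ {1}` as `x₀, x₁, …` and choose `τm`-neighbourhoods `Bₖ ∋ xₖ` such that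
`Bₖ⁻¹ * Bₖ` misses `Bᵢ` for every `i ≤ k`. Nonrapidity, applied to a fast-growing `f`, yields
finite sets `Tₙ`; let `Cₙ` consist of the elements `u⁻¹ * v ≠ 1` with `u, v ∈ Tₙ` in a common piece
of a finite cover of `G` by left cosets of `Kₙ = H₀ ⊓ ⋯ ⊓ Hₙ` (intersected, when `τm` is totally
bounded, with translates of a small neighbourhood of `1`), avoiding `B₀ ∪ ⋯ ∪ Bₙ`, and put
`ξ = ⋃ Cₙ`. Then `ξ ∩ Bₖ ⊆ C₀ ∪ ⋯ ∪ Cₖ₋₁` is finite, which makes `ξ` discrete with `1` as its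
only possible limit point; `Cₙ ⊆ Kₙ` gives (iii), and the smallness of the pieces gives (iv).
If `F ∩ Tₙ` is large, pigeonhole puts many of its points in one piece, and a Ramsey-type argument
based on the disjointness property of the `Bₖ` finds two of them, `u ≠ v`, with
`u⁻¹ * v ∉ B₀ ∪ ⋯ ∪ Bₙ`; so `ξ` meets `F⁻¹ * F`, and since `𝓕 → 1` this also makes `1` a limit
point of `ξ`.
-/

open Filter Topology Set
open scoped Finset Pointwise

theorem Finset.exists_le_card_filter_of_mul_le_card {α ι : Type*} {A : Finset α} {I : Finset ι}
    {p : ι → α → Prop} [∀ i, DecidablePred (p i)] {m : ℕ} (hI : I.Nonempty)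
    (hA : ∀ a ∈ A, ∃ i ∈ I, p i a) (hm : #I * m ≤ #A) :
    ∃ i ∈ I, m ≤ #{a ∈ A | p i a} := by
  classical
  refine Finset.exists_le_of_sum_le hI ?_
  calc ∑ _ ∈ I, m = #I * m := by simp
    _ ≤ #A := hm
    _ ≤ #(I.biUnion fun i => {a ∈ A | p i a}) := Finset.card_le_card fun a ha => by
        obtain ⟨i, hi, hpa⟩ := hA a ha
        exact Finset.mem_biUnion.2 ⟨i, hi, Finset.mem_filter.2 ⟨ha, hpa⟩⟩
    _ ≤ ∑ i ∈ I, #{a ∈ A | p i a} := Finset.card_biUnion_le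

theorem Set.finite_iUnion_diff_of_eventually_subset {α : Type*} {C : ℕ → Set α}
    (hC : ∀ n, (C n).Finite) {V : Set α} (hV : ∀ᶠ n in atTop, C n ⊆ V) :
    ((⋃ n, C n) \ V).Finite := by
  obtain ⟨N, hN⟩ := eventually_atTop.1 hV
  refine ((finite_lt_nat N).biUnion fun n _ => hC n).subset ?_
  rintro x ⟨hx, hxV⟩
  obtain ⟨n, hn⟩ := mem_iUnion.1 hx
  exact mem_biUnion (not_le.1 fun h => hxV (hN n h hn)) hn

def ramseyBound : ℕ → ℕ
  | 0 => 2
  | t + 1 => (t + 1) * ramseyBound t + 1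

/- Fix `a₀ ∈ A`. Either some `a` is related to `a₀` in none of the colours `s, …, s + t`, or by
pigeonhole some colour `k` relates `a₀` to `ramseyBound t` points, and by `hR` these are pairwise
unrelated in all colours `≤ k`. -/
theorem exists_pair_forall_lt_not_rel {α : Type*} (R : ℕ → α → α → Prop)
    (hR : ∀ i k, i ≤ k → ∀ u v w, R k u v → R k u w → ¬R i v w) (t : ℕ) :
    ∀ (s : ℕ) (A : Finset α), ramseyBound t ≤ #A →
      (∀ u ∈ A, ∀ v ∈ A, u ≠ v → ∀ k < s, ¬R k u v) →
      ∃ u ∈ A, ∃ v ∈ A, u ≠ v ∧ ∀ k < s + t, ¬R k u v := by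
  classical
  induction t with
  | zero =>
    intro s A hA hAs
    obtain ⟨u, hu, v, hv, huv⟩ :=
      Finset.one_lt_card.1 (show 1 < #A by simp only [ramseyBound] at hA; omega)
    exact ⟨u, hu, v, hv, huv, hAs u hu v hv huv⟩
  | succ t ih =>
    intro s A hA hAs
    simp only [ramseyBound] at hA
    obtain ⟨a₀, ha₀⟩ : A.Nonempty := Finset.card_pos.1 (by omega)
    by_cases hunrelated : ∃ a ∈ A, a ≠ a₀ ∧ ∀ k, s ≤ k → k < s + (t + 1) → ¬R k a₀ a
    · obtain ⟨a, ha, hne, hk⟩ := hunrelated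
      refine ⟨a₀, ha₀, a, ha, hne.symm, fun k hk' => ?_⟩
      by_cases hks : k < s
      · exact hAs a₀ ha₀ a ha hne.symm k hks
      · exact hk k (not_lt.1 hks) hk'
    push Not at hunrelated
    obtain ⟨k, hk, hcard⟩ := Finset.exists_le_card_filter_of_mul_le_card
      (A := A.erase a₀) (I := Finset.Ico s (s + (t + 1))) (p := fun k a => R k a₀ a)
      (m := ramseyBound t) ⟨s, by simp⟩
      (fun a ha => by
        obtain ⟨hne, haA⟩ := Finset.mem_erase.1 ha
        obtain ⟨k, hsk, hkt, hk⟩ := hunrelated a haA hne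
        exact ⟨k, Finset.mem_Ico.2 ⟨hsk, hkt⟩, hk⟩)
      (by rw [Nat.card_Ico, Nat.add_sub_cancel_left, Finset.card_erase_of_mem ha₀]; omega)
    rw [Finset.mem_Ico] at hk
    obtain ⟨u, hu, v, hv, huv, hnot⟩ := ih (k + 1) _ hcard fun u hu v hv _ i hi =>
      hR i k (by omega) a₀ u v (Finset.mem_filter.1 hu).2 (Finset.mem_filter.1 hv).2
    exact ⟨u, Finset.mem_of_mem_erase (Finset.mem_filter.1 hu).1,
      v, Finset.mem_of_mem_erase (Finset.mem_filter.1 hv).1, huv, fun j hj => hnot j (by omega)⟩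

section Group

variable {G : Type*} [Group G]

def HasFiniteCoverInvMulSubset (P : Set G) : Prop :=
  ∃ 𝒜 : Finset (Set G), (∀ x, ∃ A ∈ 𝒜, x ∈ A) ∧ ∀ A ∈ 𝒜, A⁻¹ * A ⊆ P

theorem hasFiniteCoverInvMulSubset_univ : HasFiniteCoverInvMulSubset (univ : Set G) :=
  ⟨{univ}, fun _ => ⟨univ, Finset.mem_singleton_self _, mem_univ _⟩, fun _ _ => subset_univ _⟩

theorem HasFiniteCoverInvMulSubset.inter {P Q : Set G} (hP : HasFiniteCoverInvMulSubset P)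
    (hQ : HasFiniteCoverInvMulSubset Q) : HasFiniteCoverInvMulSubset (P ∩ Q) := by
  classical
  obtain ⟨𝒜, h𝒜, h𝒜P⟩ := hP
  obtain ⟨ℬ, hℬ, hℬQ⟩ := hQ
  refine ⟨Finset.image₂ (· ∩ ·) 𝒜 ℬ, fun x => ?_, ?_⟩
  · obtain ⟨A, hA, hxA⟩ := h𝒜 x
    obtain ⟨B, hB, hxB⟩ := hℬ x
    exact ⟨A ∩ B, Finset.mem_image₂_of_mem hA hB, hxA, hxB⟩
  · simp only [Finset.mem_image₂]
    rintro _ ⟨A, hA, B, hB, rfl⟩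
    exact subset_inter
      ((mul_subset_mul (inv_subset_inv.2 inter_subset_left) inter_subset_left).trans (h𝒜P A hA))
      ((mul_subset_mul (inv_subset_inv.2 inter_subset_right) inter_subset_right).trans (hℬQ B hB))

theorem Subgroup.hasFiniteCoverInvMulSubset (K : Subgroup G) [K.FiniteIndex] :
    HasFiniteCoverInvMulSubset (K : Set G) := by
  classical
  have : Finite (G ⧸ K) := K.finite_quotient_of_finiteIndex
  refine ⟨(finite_range fun q : G ⧸ K => {x : G | (x : G ⧸ K) = q}).toFinset,
    fun x => ⟨_, (Finite.mem_toFinset _).2 (mem_range_self (x : G ⧸ K)), rfl⟩, ?_⟩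
  simp only [Finite.mem_toFinset, forall_mem_range]
  rintro q _ ⟨u, hu, v, hv, rfl⟩
  simpa using QuotientGroup.eq.1 ((Set.mem_inv.1 hu).trans hv.symm)

theorem Set.smul_set_inv_mul_smul_set (a : G) (s : Set G) : (a • s)⁻¹ * (a • s) = s⁻¹ * s := by
  rw [inv_smul_set_distrib, op_smul_set_mul_eq_mul_smul_set, smul_smul, inv_mul_cancel, one_smul]

theorem NonrapidFilter.exists_finite_inv_mul_hitting {𝓕 : Filter G} (hnr : NonrapidFilter 𝓕)
    {B : ℕ → Set G} (hB : ∀ i k, i ≤ k → Disjoint ((B k)⁻¹ * B k) (B i)) {P : ℕ → Set G}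
    (hP : ∀ n, HasFiniteCoverInvMulSubset (P n)) :
    ∃ C : ℕ → Set G, (∀ n, (C n).Finite) ∧ (∀ n, C n ⊆ P n) ∧ (∀ n, C n ⊆ {1}ᶜ) ∧
      (∀ n k, k ≤ n → Disjoint (C n) (B k)) ∧ ∀ F ∈ 𝓕, ∃ n, (C n ∩ (F⁻¹ * F)).Nonempty := by
  classical
  choose 𝒜 h𝒜 h𝒜P using hP
  obtain ⟨T, hT⟩ := hnr fun n => #(𝒜 n) * ramseyBound (n + 1)
  have hrel : ∀ i k, i ≤ k → ∀ u v w : G, u⁻¹ * v ∈ B k → u⁻¹ * w ∈ B k → v⁻¹ * w ∉ B i :=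
    fun i k hik u v w hv hw => (hB i k hik).notMem_of_mem_left (by
      simpa [mul_assoc] using mul_mem_mul (Set.inv_mem_inv.2 hv) hw)
  refine ⟨fun n => {x | x ∈ (T n : Set G)⁻¹ * T n ∧ x ∈ P n ∧ x ≠ 1 ∧ ∀ k ≤ n, x ∉ B k},
    fun n => ((T n).finite_toSet.inv.mul (T n).finite_toSet).subset fun _ hx => hx.1,
    fun n _ hx => hx.2.1, fun n _ hx => hx.2.2.1,
    fun n k hkn => disjoint_left.2 fun _ hx => hx.2.2.2 k hkn, fun F hF => ?_⟩
  obtain ⟨n, hn⟩ := hT F hF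
  rw [show F ∩ (T n : Set G) = ↑{a ∈ T n | a ∈ F} by ext; simp [and_comm],
    ncard_coe_finset] at hn
  obtain ⟨S, hS, hcard⟩ := Finset.exists_le_card_filter_of_mul_le_card (p := fun S a => a ∈ S)
    ⟨_, (h𝒜 n 1).choose_spec.1⟩ (fun a _ => h𝒜 n a) hn
  obtain ⟨u, hu, v, hv, huv, hnot⟩ := exists_pair_forall_lt_not_rel _ hrel (n + 1) 0 _ hcard
    fun _ _ _ _ _ _ hk => absurd hk (Nat.not_lt_zero _)
  simp only [Finset.mem_filter] at hu hv
  refine ⟨n, u⁻¹ * v, ⟨mul_mem_mul (Set.inv_mem_inv.2 hu.1.1) hv.1.1,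
    h𝒜P n S hS (mul_mem_mul (Set.inv_mem_inv.2 hu.2) hv.2), fun h => huv (inv_mul_eq_one.1 h),
    fun k hk => hnot k (by omega)⟩, mul_mem_mul (Set.inv_mem_inv.2 hu.1.2) hv.1.2⟩

variable [TopologicalSpace G] [IsTopologicalGroup G]

theorem exists_mem_nhds_one_inv_mul_subset {U : Set G} (hU : U ∈ 𝓝 (1 : G)) :
    ∃ W ∈ 𝓝 (1 : G), W⁻¹ * W ⊆ U := by
  obtain ⟨V, hV, hVU⟩ := exists_nhds_split_inv hU
  refine ⟨V⁻¹, inv_mem_nhds_one G hV, ?_⟩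
  rintro _ ⟨a, ha, b, hb, rfl⟩
  simpa using hVU a (by simpa using ha) b⁻¹ (Set.mem_inv.1 hb)

theorem hasFiniteCoverInvMulSubset_of_mem_nhds
    (hTB : ∀ V ∈ 𝓝 (1 : G), ∃ T : Finset G, (T : Set G) * V = univ) {V : Set G}
    (hV : V ∈ 𝓝 (1 : G)) : HasFiniteCoverInvMulSubset V := by
  classical
  obtain ⟨W, hW, hWV⟩ := exists_mem_nhds_one_inv_mul_subset hV
  obtain ⟨T, hT⟩ := hTB W hW
  refine ⟨T.image (· • W), fun x => ?_, ?_⟩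
  · obtain ⟨t, ht, w, hw, rfl⟩ : x ∈ (T : Set G) * W := hT ▸ mem_univ x
    exact ⟨t • W, Finset.mem_image_of_mem _ ht, smul_mem_smul_set hw⟩
  · simp only [Finset.mem_image]
    rintro _ ⟨t, -, rfl⟩
    rwa [smul_set_inv_mul_smul_set]

theorem exists_seq_hasFiniteCoverInvMulSubset [FirstCountableTopology G] :
    ∃ Q : ℕ → Set G, (∀ n, HasFiniteCoverInvMulSubset (Q n)) ∧
      ((∀ V ∈ 𝓝 (1 : G), ∃ T : Finset G, (T : Set G) * V = univ) →
        ∀ V ∈ 𝓝 (1 : G), ∀ᶠ n in atTop, Q n ⊆ V) := by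
  by_cases hTB : ∀ V ∈ 𝓝 (1 : G), ∃ T : Finset G, (T : Set G) * V = univ
  · obtain ⟨Vb, hVb⟩ := (𝓝 (1 : G)).exists_antitone_basis
    exact ⟨Vb, fun n => hasFiniteCoverInvMulSubset_of_mem_nhds hTB (hVb.mem n),
      fun _ _ hV => hVb.eventually_subset hV⟩
  · exact ⟨fun _ => univ, fun _ => hasFiniteCoverInvMulSubset_univ, fun h => absurd h hTB⟩

theorem exists_mem_nhds_one_disjoint_inv_mul [T2Space G] {x : G} (hx : x ≠ 1) :
    ∃ U ∈ 𝓝 (1 : G), Disjoint (U⁻¹ * U) (x • U) := by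
  obtain ⟨N₀, hN₀, N₁, hN₁, hN⟩ := Filter.disjoint_iff.1 (disjoint_nhds_nhds.2 hx.symm)
  obtain ⟨W, hW, hWN₀⟩ := exists_mem_nhds_one_inv_mul_subset hN₀
  have hxN₁ : x⁻¹ • N₁ ∈ 𝓝 (1 : G) := by
    simpa using (smul_mem_nhds_smul_iff x⁻¹).2 hN₁
  refine ⟨W ∩ x⁻¹ • N₁, inter_mem hW hxN₁, hN.mono ?_ ?_⟩
  · exact (mul_subset_mul (inv_subset_inv.2 inter_subset_left) inter_subset_left).trans hWN₀
  · simpa using smul_set_mono (a := x) (inter_subset_right (s := W) (t := x⁻¹ • N₁))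

/- With `B k = x k • W k` and `W k` shrinking, `(B k)⁻¹ * B k = (W k)⁻¹ * W k` lies in the
neighbourhood of `1` that was chosen at stage `i ≤ k` to avoid `B i`. -/
theorem exists_seq_nhds_disjoint_inv_mul [T2Space G] (x : ℕ → G) (hx : ∀ k, x k ≠ 1) :
    ∃ B : ℕ → Set G, (∀ k, B k ∈ 𝓝 (x k)) ∧ ∀ i k, i ≤ k → Disjoint ((B k)⁻¹ * B k) (B i) := by
  choose U hU hUx using fun k => exists_mem_nhds_one_disjoint_inv_mul (hx k)
  have hWU : ∀ {i k}, i ≤ k → (⋂ j ∈ Iic k, U j) ⊆ U i := fun h => biInter_subset_of_mem h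
  refine ⟨fun k => x k • ⋂ j ∈ Iic k, U j, fun k => ?_, fun i k hik => ?_⟩
  · simpa using (smul_mem_nhds_smul_iff (x k)).2 ((biInter_mem (finite_Iic k)).2 fun j _ => hU j)
  · rw [smul_set_inv_mul_smul_set]
    exact (hUx i).mono (mul_subset_mul (inv_subset_inv.2 (hWU hik)) (hWU hik))
      (smul_set_mono (hWU le_rfl))

end Group

theorem exists_nhds_inter_subset_singleton {X : Type*} [TopologicalSpace X] [T1Space X]
    {D N : Set X} {x : X} (hN : N ∈ 𝓝 x) (hfin : (D ∩ N).Finite) : ∃ U ∈ 𝓝 x, U ∩ D ⊆ {x} := by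
  refine ⟨N ∩ ((D ∩ N) \ {x})ᶜ,
    inter_mem hN (hfin.sdiff.isClosed.compl_mem_nhds fun h => h.2 rfl), ?_⟩
  rintro y ⟨⟨hyN, hy⟩, hyD⟩
  by_contra hyx
  exact hy ⟨⟨hyD, hyN⟩, hyx⟩

theorem isDiscreteSubset_and_isLimitPoint_one {G : Type*} [Group G] [TopologicalSpace G]
    [IsTopologicalGroup G] [T1Space G] {𝓕 : Filter G} (h𝓕 : 𝓕 ≤ 𝓝 1) {D : Set G}
    (hD : D ⊆ {1}ᶜ) (hfin : ∀ x ≠ 1, ∃ N ∈ 𝓝 x, (D ∩ N).Finite)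
    (hmeet : ∀ F ∈ 𝓕, (D ∩ (F⁻¹ * F)).Nonempty) :
    IsDiscreteSubset D ∧ IsLimitPoint 1 D ∧ ∀ x, IsLimitPoint x D → x = 1 := by
  have hsep : ∀ x ≠ 1, ∃ U ∈ 𝓝 x, U ∩ D ⊆ {x} := fun x hx =>
    let ⟨_, hN, hN'⟩ := hfin x hx
    exists_nhds_inter_subset_singleton hN hN'
  refine ⟨fun x hx => ?_, fun U hU => ?_, fun x hx => ?_⟩
  · obtain ⟨U, hU, hUD⟩ := hsep x (hD hx)
    exact ⟨U, hU, subset_antisymm hUD (singleton_subset_iff.2 ⟨mem_of_mem_nhds hU, hx⟩)⟩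
  · obtain ⟨W, hW, hWU⟩ := exists_mem_nhds_one_inv_mul_subset hU
    obtain ⟨y, hyD, hyW⟩ := hmeet W (h𝓕 hW)
    exact ⟨y, ⟨hyD, hD hyD⟩, hWU hyW⟩
  · by_contra hx1
    obtain ⟨U, hU, hUD⟩ := hsep x hx1
    obtain ⟨y, ⟨hyD, hyx⟩, hyU⟩ := hx U hU
    exact hyx (hUD ⟨hyU, hyD⟩)

theorem exists_locallyFinite_inv_mul_hitting {G : Type*} [Group G] [Countable G] [Infinite G]
    [TopologicalSpace G] [IsTopologicalGroup G] [T2Space G] [FirstCountableTopology G]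
    {𝓕 : Filter G} (hnr : NonrapidFilter 𝓕) (H : ℕ → Subgroup G) (hH : ∀ n, (H n).FiniteIndex) :
    ∃ ξ : Set G, ξ ⊆ {1}ᶜ ∧ (∀ x ≠ 1, ∃ N ∈ 𝓝 x, (ξ ∩ N).Finite) ∧
      (∀ F ∈ 𝓕, (ξ ∩ (F⁻¹ * F)).Nonempty) ∧ (∀ n, (ξ \ (H n : Set G)).Finite) ∧
      ((∀ V ∈ 𝓝 (1 : G), ∃ T : Finset G, (T : Set G) * V = univ) →
        ∀ V ∈ 𝓝 (1 : G), (ξ \ V).Finite) := by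
  obtain ⟨x, hx⟩ := (to_countable ({1}ᶜ : Set G)).exists_eq_range
    (finite_singleton (1 : G)).infinite_compl.nonempty
  obtain ⟨B, hBx, hB⟩ := exists_seq_nhds_disjoint_inv_mul x fun k =>
    (hx.symm ▸ mem_range_self k : x k ∈ ({1}ᶜ : Set G))
  obtain ⟨Q, hQ, hQV⟩ := exists_seq_hasFiniteCoverInvMulSubset (G := G)
  let K n := ⨅ i ∈ Finset.range (n + 1), H i
  have hKH : ∀ {m n}, n ≤ m → (K m : Set G) ⊆ H n := fun h =>
    SetLike.coe_subset_coe.2 (iInf₂_le _ (Finset.mem_range.2 (Nat.lt_succ_of_le h)))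
  have hKQ : ∀ n, HasFiniteCoverInvMulSubset ((K n : Set G) ∩ Q n) := fun n =>
    have : (K n).FiniteIndex := Subgroup.finiteIndex_iInf' H fun i _ => hH i
    (K n).hasFiniteCoverInvMulSubset.inter (hQ n)
  obtain ⟨C, hCfin, hCP, hC1, hCB, hCF⟩ := hnr.exists_finite_inv_mul_hitting hB hKQ
  refine ⟨⋃ n, C n, iUnion_subset hC1, fun y hy => ?_, fun F hF => ?_, fun n => ?_,
    fun hTB V hV => ?_⟩
  · obtain ⟨k, rfl⟩ : y ∈ range x := hx ▸ hy
    refine ⟨B k, hBx k, ?_⟩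
    simpa only [sdiff_compl] using finite_iUnion_diff_of_eventually_subset hCfin
      (eventually_atTop.2 ⟨k, fun n hn => (hCB n k hn).subset_compl_right⟩)
  · obtain ⟨n, y, hyC, hyF⟩ := hCF F hF
    exact ⟨y, mem_iUnion_of_mem n hyC, hyF⟩
  · exact finite_iUnion_diff_of_eventually_subset hCfin
      (eventually_atTop.2 ⟨n, fun m hm => (hCP m).trans (inter_subset_left.trans (hKH hm))⟩)
  · exact finite_iUnion_diff_of_eventually_subset hCfin
      ((hQV hTB V hV).mono fun n hn => (hCP n).trans (inter_subset_right.trans hn))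

theorem stmt_11_general {G : Type*} [Group G] [Countable G] [Infinite G]
    (τ τm : TopologicalSpace G)
    (hτg : @IsTopologicalGroup G τ _)
    -- `τ ≤ τm` in Mathlib's order means `τm` is coarser than `τ`
    (hcoarser : τ ≤ τm)
    (hτmg : @IsTopologicalGroup G τm _) (hmetr : @TopologicalSpace.MetrizableSpace G τm)
    (𝓕 : Filter G) (hnr : NonrapidFilter 𝓕)
    (hconv : 𝓕 ≤ @nhds G τ 1)
    (H : ℕ → Subgroup G) (hH : ∀ n, (H n).FiniteIndex) :
    ∃ ξ : Set G, ξ ⊆ {(1 : G)}ᶜ ∧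
      (@IsDiscreteSubset G τ ξ ∧ @IsLimitPoint G τ 1 ξ ∧
        ∀ x, @IsLimitPoint G τ x ξ → x = 1) ∧
      (@IsDiscreteSubset G τm ξ ∧ @IsLimitPoint G τm 1 ξ ∧
        ∀ x, @IsLimitPoint G τm x ξ → x = 1) ∧
      (∀ F ∈ 𝓕, (ξ ∩ (F⁻¹ * F)).Nonempty) ∧
      (∀ n, (ξ \ (H n : Set G)).Finite) ∧
      ((∀ V ∈ @nhds G τm 1, ∃ T : Finset G, (T : Set G) * V = Set.univ) →
        ∀ V ∈ @nhds G τm 1, (ξ \ V).Finite) := by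
  obtain ⟨ξ, hξ1, hξfin, hξF, hξH, hξV⟩ :=
    @exists_locallyFinite_inv_mul_hitting G _ _ _ τm hτmg _ _ 𝓕 hnr H hH
  have hT1m : @T1Space G τm := inferInstance
  refine ⟨ξ, hξ1, ?_, ?_, hξF, hξH, hξV⟩
  · exact @isDiscreteSubset_and_isLimitPoint_one G _ τ hτg (t1Space_antitone hcoarser hT1m)
      𝓕 hconv ξ hξ1
      (fun x hx => let ⟨N, hN, hNfin⟩ := hξfin x hx; ⟨N, nhds_mono hcoarser hN, hNfin⟩) hξF
  · exact @isDiscreteSubset_and_isLimitPoint_one G _ τm hτmg hT1m 𝓕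
      (hconv.trans (nhds_mono hcoarser)) ξ hξ1 hξfin hξF

theorem stmt_11 {G : Type*} [Group G] [Countable G] [Infinite G]
    (τ τm : TopologicalSpace G)
    (hτg : @IsTopologicalGroup G τ _) (hτ2 : @T2Space G τ)
    -- `τ ≤ τm` in Mathlib's order means `τm` is coarser than `τ`
    (hcoarser : τ ≤ τm)
    (hτmg : @IsTopologicalGroup G τm _) (hmetr : @TopologicalSpace.MetrizableSpace G τm)
    (𝓕 : Filter G) (hfree : IsFreeFilter 𝓕) (hnr : NonrapidFilter 𝓕)
    (hconv : 𝓕 ≤ @nhds G τ 1)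
    (H : ℕ → Subgroup G) (hH : ∀ n, (H n).FiniteIndex) :
    ∃ ξ : Set G, ξ ⊆ {(1 : G)}ᶜ ∧
      (@IsDiscreteSubset G τ ξ ∧ @IsLimitPoint G τ 1 ξ ∧
        ∀ x, @IsLimitPoint G τ x ξ → x = 1) ∧
      (@IsDiscreteSubset G τm ξ ∧ @IsLimitPoint G τm 1 ξ ∧
        ∀ x, @IsLimitPoint G τm x ξ → x = 1) ∧
      (∀ F ∈ 𝓕, (ξ ∩ (F⁻¹ * F)).Nonempty) ∧
      (∀ n, (ξ \ (H n : Set G)).Finite) ∧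
      ((∀ V ∈ @nhds G τm 1, ∃ T : Finset G, (T : Set G) * V = Set.univ) →
        ∀ V ∈ @nhds G τm 1, (ξ \ V).Finite) :=
  stmt_11_general τ τm hτg hcoarser hτmg hmetr 𝓕 hnr hconv H hH
end

section
/- Let G be a countably infinite nondiscrete Hausdorff topological group with identity e such that the filter of neighborhoods of e is nonrapid, and let (H_n)_{n∈ω} be a sequence of subgroups of finite index in G. Then there exists a set ξ ⊆ G \ {e} such that: (i) ξ is discrete and e is its only limit point; and (ii) ξ \ H_n is finite for each n ∈ ω. -/
open Pointwise

/-
Rank the elements of `G` injectively by `r : G → ℕ` and choose neighbourhoods `O g` of the points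
`g ≠ 1` so small that `x⁻¹ * y ∉ O g` whenever `x, y ∈ O i` and `r g ≤ r i`. With
`K n = H 0 ⊓ ⋯ ⊓ H n` and `J n` the points `g ≠ 1` of rank `< n`, nonrapidity for
`f n = [G : K n] · pairBound |J n|` yields finite sets `T n`, and `ξ` collects, for every `n`, the
quotients `a⁻¹ * b` of elements of `T n` lying in `K n \ {1}` and outside all `O g`, `g ∈ J n`.
Each layer is finite; `O x` meets only the layers of index `≤ r x`, and only the layers of index
`< n` leave `H n`. Every neighbourhood `V` of `1` contains `f n` points of some `T n`, hence
`pairBound |J n|` of them in one coset of `K n`, and a Ramsey-type descent along the ranks finds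
two of them whose quotient lies in no `O g` with `g ∈ J n`.
-/

open Filter Topology Set Function

theorem Set.finite_iUnion_inter_of_disjoint {α : Type*} {L : ℕ → Set α} (hL : ∀ n, (L n).Finite)
    {S : Set α} {N : ℕ} (hS : ∀ n, N ≤ n → Disjoint (L n) S) : ((⋃ n, L n) ∩ S).Finite := by
  refine ((finite_lt_nat N).biUnion fun n _ => hL n).subset ?_
  rintro x ⟨hx, hxS⟩
  obtain ⟨n, hn⟩ := mem_iUnion.1 hx
  exact mem_biUnion (not_le.1 fun h => (hS n h).notMem_of_mem_left hn hxS) hn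

section LimitPoints

variable {X : Type*} [TopologicalSpace X] [T1Space X] {D : Set X}

theorem exists_mem_nhds_inter_subset_singleton {U : Set X} {x : X} (hU : U ∈ 𝓝 x)
    (hD : (U ∩ D).Finite) : ∃ V ∈ 𝓝 x, V ∩ D ⊆ {x} :=
  ⟨U \ ((U ∩ D) \ {x}), sdiff_mem hU (hD.sdiff.isClosed.compl_mem_nhds fun h => h.2 rfl),
    fun _ ⟨⟨hzU, hz⟩, hzD⟩ => by_contra fun hzx => hz ⟨⟨hzU, hzD⟩, hzx⟩⟩

theorem isDiscreteSubset_of_finite_inter_nhds (h : ∀ x ∈ D, ∃ U ∈ 𝓝 x, (U ∩ D).Finite) :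
    IsDiscreteSubset D := by
  intro x hx
  obtain ⟨U, hU, hUD⟩ := h x hx
  obtain ⟨V, hV, hVD⟩ := exists_mem_nhds_inter_subset_singleton hU hUD
  exact ⟨V, hV, hVD.antisymm (singleton_subset_iff.2 ⟨mem_of_mem_nhds hV, hx⟩)⟩

theorem eq_of_isLimitPoint_of_finite_inter_nhds {a x : X}
    (h : ∀ y ≠ a, ∃ U ∈ 𝓝 y, (U ∩ D).Finite) (hx : IsLimitPoint x D) : x = a := by
  by_contra hxa
  obtain ⟨U, hU, hUD⟩ := h x hxa
  obtain ⟨V, hV, hVD⟩ := exists_mem_nhds_inter_subset_singleton hU hUD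
  obtain ⟨z, ⟨hzD, hzx⟩, hzV⟩ := hx V hV
  exact hzx (hVD ⟨hzV, hzD⟩)

end LimitPoints

section Descent

variable {G ι : Type*} [Group G] [Preorder ι]

-- `pairBound (k + 1) - 1` points in `≤ k + 1` classes leave a class with `pairBound k` points.
def pairBound : ℕ → ℕ
  | 0 => 2
  | k + 1 => (k + 1) * pairBound k + 2

theorem exists_ne_forall_inv_mul_notMem (r : G → ι) (O : G → Set G) (k : ℕ) (J A : Finset G)
    (hO : ∀ g ∈ J, ∀ i ∈ J, r g ≤ r i → ∀ x ∈ O i, ∀ y ∈ O i, x⁻¹ * y ∉ O g)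
    (hJ : J.card ≤ k) (hA : pairBound k ≤ A.card) :
    ∃ a ∈ A, ∃ b ∈ A, a ≠ b ∧ ∀ g ∈ J, a⁻¹ * b ∉ O g := by
  classical
  induction k generalizing J A with
  | zero =>
    obtain ⟨a, ha, b, hb, hab⟩ := Finset.one_lt_card.1
      (by simp only [pairBound] at hA; omega : 1 < A.card)
    rw [Finset.card_eq_zero.1 (Nat.le_zero.1 hJ)]
    exact ⟨a, ha, b, hb, hab, by simp⟩
  | succ k ih =>
    by_contra! hcover
    obtain ⟨a₀, ha₀⟩ : A.Nonempty := Finset.card_pos.1 (by simp only [pairBound] at hA; omega)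
    let fiber (i : G) : Finset G := (A.erase a₀).filter fun a => a₀⁻¹ * a ∈ O i
    have hcover₀ : A.erase a₀ ⊆ J.biUnion fiber := fun a ha => by
      obtain ⟨i, hi, hai⟩ :=
        hcover a₀ ha₀ a (Finset.mem_of_mem_erase ha) (Finset.ne_of_mem_erase ha).symm
      exact Finset.mem_biUnion.2 ⟨i, hi, Finset.mem_filter.2 ⟨ha, hai⟩⟩
    have hsum : ∑ _i ∈ J, pairBound k < ∑ i ∈ J, (fiber i).card :=
      calc ∑ _i ∈ J, pairBound k = J.card * pairBound k := by rw [Finset.sum_const, smul_eq_mul]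
        _ ≤ (k + 1) * pairBound k := Nat.mul_le_mul_right _ hJ
        _ < (A.erase a₀).card := by
          rw [Finset.card_erase_of_mem ha₀]; simp only [pairBound] at hA; omega
        _ ≤ (J.biUnion fiber).card := Finset.card_le_card hcover₀
        _ ≤ ∑ i ∈ J, (fiber i).card := Finset.card_biUnion_le
    obtain ⟨i, hi, hfiber⟩ := Finset.exists_lt_of_sum_lt hsum
    -- quotients of pairs in `fiber i` lie in `(O i)⁻¹ * O i`, so only `g` ranked above `i` remain
    let J' := J.filter fun g => ¬ r g ≤ r i
    have hJ' : J'.card ≤ k := Nat.le_of_lt_succ <| (Finset.card_lt_card <|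
      Finset.filter_ssubset.2 ⟨i, hi, not_not.2 le_rfl⟩).trans_le hJ
    obtain ⟨a, ha, b, hb, hab, hJ'ab⟩ := ih J' (fiber i)
      (fun g hg j hj => hO g (Finset.mem_filter.1 hg).1 j (Finset.mem_filter.1 hj).1) hJ' hfiber.le
    obtain ⟨g, hg, habg⟩ := hcover a (Finset.mem_of_mem_erase (Finset.mem_filter.1 ha).1)
      b (Finset.mem_of_mem_erase (Finset.mem_filter.1 hb).1) hab
    refine hJ'ab g (Finset.mem_filter.2 ⟨hg, fun hgi => ?_⟩) habg
    refine hO g hg i hi hgi _ (Finset.mem_filter.1 ha).2 _ (Finset.mem_filter.1 hb).2 ?_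
    rwa [mul_inv_rev, inv_inv, mul_assoc, mul_inv_cancel_left]

end Descent

section TopologicalGroup

variable {G : Type*} [Group G] [TopologicalSpace G] [IsTopologicalGroup G]

theorem exists_nhds_one_inv_mul_mem {s : Set G} (hs : s ∈ 𝓝 (1 : G)) :
    ∃ V ∈ 𝓝 (1 : G), ∀ a ∈ V, ∀ b ∈ V, a⁻¹ * b ∈ s := by
  obtain ⟨V, hV, h⟩ := exists_nhds_split_inv hs
  exact ⟨V⁻¹, inv_mem_nhds_one G hV, fun a ha b hb => by simpa using h _ ha _ hb⟩

theorem exists_nhds_forall_inv_mul_notMem [T1Space G] {r : G → ℕ}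
    (hr : ∀ n, {g | r g ≤ n}.Finite) :
    ∃ O : G → Set G, (∀ g ≠ 1, O g ∈ 𝓝 g) ∧
      ∀ g i, g ≠ 1 → r g ≤ r i → ∀ x ∈ O i, ∀ y ∈ O i, x⁻¹ * y ∉ O g := by
  have hU : ∀ g : G, ∃ U ∈ 𝓝 (1 : G), g ≠ 1 → ∀ a ∈ U, ∀ b ∈ U, a / b ≠ g := by
    intro g
    by_cases hg : g = 1
    · exact ⟨univ, univ_mem, fun h => absurd hg h⟩
    · obtain ⟨U, hU, h⟩ := exists_nhds_split_inv (isOpen_compl_singleton.mem_nhds (Ne.symm hg))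
      exact ⟨U, hU, fun _ a ha b hb => h a ha b hb⟩
  choose U hU hUg using hU
  have hW : ∀ i, (⋂ g ∈ {g | r g ≤ r i}, U g) ∈ 𝓝 (1 : G) := fun i =>
    (biInter_mem (hr (r i))).2 fun g _ => hU g
  choose V hV hVW using fun i => exists_nhds_one_inv_mul_mem (hW i)
  refine ⟨fun i => (i⁻¹ * ·) ⁻¹' V i, fun g _ => ?_, fun g i hg hgi x hx y hy hxy => ?_⟩
  · rw [← nhds_translation_inv_mul]
    exact preimage_mem_comap (hV g)
  have hxy_U : x⁻¹ * y ∈ U g := by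
    have := hVW i _ hx _ hy
    rw [mul_inv_rev, inv_inv, mul_assoc, mul_inv_cancel_left] at this
    exact mem_iInter₂.1 this g hgi
  have hgxy_U : g⁻¹ * (x⁻¹ * y) ∈ U g := by
    have := hVW g 1 (mem_of_mem_nhds (hV g)) _ hxy
    rw [inv_one, one_mul] at this
    exact mem_iInter₂.1 this g (le_refl (r g))
  exact hUg g hg _ hxy_U _ hgxy_U
    (by rw [div_eq_mul_inv, mul_inv_rev, inv_inv, mul_inv_cancel_left])

end TopologicalGroup

section Quotients

variable {G : Type*} [Group G]

def avoidingQuotients (K : Subgroup G) (O : G → Set G) (J T : Finset G) : Set G :=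
  ((T : Set G)⁻¹ * T) ∩ {q | q ≠ 1 ∧ q ∈ K ∧ ∀ g ∈ J, q ∉ O g}

theorem avoidingQuotients_finite (K : Subgroup G) (O : G → Set G) (J T : Finset G) :
    (avoidingQuotients K O J T).Finite :=
  (T.finite_toSet.inv.mul T.finite_toSet).subset inter_subset_left

theorem exists_inv_mul_mem_avoidingQuotients {ι : Type*} [Preorder ι] (K : Subgroup G)
    [K.FiniteIndex] (r : G → ι) (O : G → Set G) (J T : Finset G)
    (hO : ∀ g ∈ J, ∀ i ∈ J, r g ≤ r i → ∀ x ∈ O i, ∀ y ∈ O i, x⁻¹ * y ∉ O g) (V : Set G)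
    (hV : K.index * pairBound J.card ≤ (V ∩ T).ncard) :
    ∃ a ∈ V, ∃ b ∈ V, a⁻¹ * b ∈ avoidingQuotients K O J T := by
  classical
  let := K.fintypeQuotientOfFiniteIndex
  let A := T.filter (· ∈ V)
  have hA : (Finset.univ : Finset (G ⧸ K)).card * pairBound J.card ≤ A.card := by
    have hVT : V ∩ T = (A : Set G) := by ext; simp [A, and_comm]
    rwa [Finset.card_univ, ← Nat.card_eq_fintype_card, ← K.index_eq_card, ← ncard_coe_finset A,
      ← hVT]
  obtain ⟨c, -, hc⟩ := Finset.exists_le_card_fiber_of_mul_le_card_of_maps_to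
    (f := (QuotientGroup.mk : G → G ⧸ K)) (fun _ _ => Finset.mem_univ _) Finset.univ_nonempty hA
  obtain ⟨a, ha, b, hb, hab, hJ⟩ := exists_ne_forall_inv_mul_notMem r O _ J _ hO le_rfl hc
  simp only [A, Finset.mem_filter] at ha hb
  refine ⟨a, ha.1.2, b, hb.1.2, mul_mem_mul (inv_mem_inv.2 ha.1.1) hb.1.1, ?_, ?_, hJ⟩
  · rwa [Ne, inv_mul_eq_one]
  · exact QuotientGroup.eq.1 (ha.2.trans hb.2.symm)

end Quotients

theorem stmt_12_general {G : Type*} [Group G] [Countable G]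
    [TopologicalSpace G] [IsTopologicalGroup G] [T2Space G]
    (hnr : NonrapidFilter (nhds (1 : G)))
    (H : ℕ → Subgroup G) (hH : ∀ n, (H n).FiniteIndex) :
    ∃ ξ : Set G, ξ ⊆ {(1 : G)}ᶜ ∧
      (IsDiscreteSubset ξ ∧ IsLimitPoint 1 ξ ∧ ∀ x, IsLimitPoint x ξ → x = 1) ∧
      (∀ n, (ξ \ (H n : Set G)).Finite) := by
  obtain ⟨r, hr⟩ := Countable.exists_injective_nat G
  have hr_fin : ∀ n, {g | r g ≤ n}.Finite := fun n => (finite_Iic n).preimage hr.injOn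
  obtain ⟨O, hO_nhds, hO⟩ := exists_nhds_forall_inv_mul_notMem hr_fin
  let K (n : ℕ) : Subgroup G := ⨅ m : Iic n, H m
  have hK : ∀ n, (K n).FiniteIndex := fun n => Subgroup.finiteIndex_iInf fun m => hH m
  let J (n : ℕ) : Finset G :=
    ((hr_fin n).subset fun g (hg : g ≠ 1 ∧ r g < n) => hg.2.le).toFinset
  have hJ : ∀ n g, g ∈ J n ↔ g ≠ 1 ∧ r g < n := fun n g => Finite.mem_toFinset _
  obtain ⟨T, hT⟩ := hnr fun n => (K n).index * pairBound (J n).card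
  let L (n : ℕ) := avoidingQuotients (K n) O (J n) (T n)
  have hL : ∀ n, L n ⊆ {q | q ≠ 1 ∧ q ∈ K n ∧ ∀ g ∈ J n, q ∉ O g} := fun n => inter_subset_right
  have hloc : ∀ x ≠ (1 : G), ∃ U ∈ 𝓝 x, (U ∩ ⋃ n, L n).Finite := fun x hx =>
    ⟨O x, hO_nhds x hx, inter_comm (O x) _ ▸ finite_iUnion_inter_of_disjoint
      (fun n => avoidingQuotients_finite _ _ _ _) (N := r x + 1) fun n hn =>
        disjoint_left.2 fun q hq => (hL n hq).2.2 x ((hJ n x).2 ⟨hx, hn⟩)⟩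
  refine ⟨⋃ n, L n, iUnion_subset fun n q hq => (hL n hq).1,
    ⟨isDiscreteSubset_of_finite_inter_nhds fun x hx => hloc x ?_, fun U hU => ?_,
      fun x => eq_of_isLimitPoint_of_finite_inter_nhds hloc⟩, fun n => ?_⟩
  · obtain ⟨n, hn⟩ := mem_iUnion.1 hx
    exact (hL n hn).1
  · obtain ⟨V, hV, hVU⟩ := exists_nhds_one_inv_mul_mem hU
    obtain ⟨n, hn⟩ := hT V hV
    obtain ⟨a, ha, b, hb, hab⟩ := exists_inv_mul_mem_avoidingQuotients (K n) r O (J n) (T n)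
      (fun g hg i _ => hO g i ((hJ n g).1 hg).1) V hn
    exact ⟨a⁻¹ * b, ⟨mem_iUnion.2 ⟨n, hab⟩, (hL n hab).1⟩, hVU a ha b hb⟩
  · refine finite_iUnion_inter_of_disjoint (fun m => avoidingQuotients_finite _ _ _ _)
      (N := n) fun m hm => disjoint_left.2 fun q hq hqH => hqH ?_
    exact Subgroup.mem_iInf.1 (hL m hq).2.1 ⟨n, hm⟩

theorem stmt_12 {G : Type*} [Group G] [Countable G] [Infinite G]
    [TopologicalSpace G] [IsTopologicalGroup G] [T2Space G]
    (hnd : ¬ DiscreteTopology G)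
    (hnr : NonrapidFilter (nhds (1 : G)))
    (H : ℕ → Subgroup G) (hH : ∀ n, (H n).FiniteIndex) :
    ∃ ξ : Set G, ξ ⊆ {(1 : G)}ᶜ ∧
      (IsDiscreteSubset ξ ∧ IsLimitPoint 1 ξ ∧ ∀ x, IsLimitPoint x ξ → x = 1) ∧
      (∀ n, (ξ \ (H n : Set G)).Finite) :=
  stmt_12_general hnr H hH
end
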